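/- Let C be the image of a uniformly random linear map G: F_2^k → F_2^m, and let c ≠ c' be two distinct codewords Gu, Gu' with u ≠ u'. Fix index sequences s_1 < ... < s_t and s'_1 < ... < s'_t in [m]. Then the probability that (Gu)_{s_i} = (Gu')_{s'_i} holds for all i ∈ [t] is at most 2^{-t}. -/

import Mathlib

/-!
The event is the kernel of the linear map `G ↦ ((Gu)_{s_i} - (Gu')_{s'_i})_i` to `F_2^t`, so the
probability is exactly `2^{-t}` once this map is surjective. Since `u ≠ u'`, after possibly swapping
`(u, s)` with `(u', s')` there is a coordinate `q` with `u_q = 1` and `u'_q = 0`; on matrices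
supported in column `q` the map is `x ↦ (x_{s_i})_i`, which is onto because `s` is injective.
-/

open Matrix Function

theorem LinearMap.card_ker_mul_card_of_surjective {R V W : Type*} [Ring R] [AddCommGroup V]
    [Module R V] [AddCommGroup W] [Module R W] (f : V →ₗ[R] W) (hf : Surjective f) :
    Nat.card (LinearMap.ker f) * Nat.card W = Nat.card V := by
  rw [Submodule.card_eq_card_quotient_mul_card (LinearMap.ker f),
    Nat.card_congr (f.quotKerEquivOfSurjective hf).toEquiv]

section

variable {R m k ι : Type*} [CommRing R] [Fintype k]

def agreementDefect (u u' : k → R) (s s' : ι → m) : Matrix m k R →ₗ[R] ι → R where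
  toFun G i := (G *ᵥ u) (s i) - (G *ᵥ u') (s' i)
  map_add' G H := by ext i; simp only [add_mulVec, Pi.add_apply]; ring
  map_smul' c G := by
    ext i; simp only [smul_mulVec, Pi.smul_apply, smul_eq_mul, RingHom.id_apply]; ring

theorem mem_ker_agreementDefect_iff {u u' : k → R} {s s' : ι → m} {G : Matrix m k R} :
    G ∈ LinearMap.ker (agreementDefect u u' s s') ↔
      ∀ i, (G *ᵥ u) (s i) = (G *ᵥ u') (s' i) := by
  simp [agreementDefect, funext_iff, sub_eq_zero]

theorem agreementDefect_swap (u u' : k → R) (s s' : ι → m) :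
    agreementDefect u' u s' s = -agreementDefect u u' s s' := by
  ext G i; simp [agreementDefect]

end

theorem agreementDefect_surjective {K m k ι : Type*} [Field K] [Fintype k] [DecidableEq k]
    {u u' : k → K} {s : ι → m} (s' : ι → m) {q : k} (hu : u q ≠ 0) (hu' : u' q = 0)
    (hs : Injective s) : Surjective (agreementDefect u u' s s') := by
  intro b
  let x : m → K := extend s (fun i => b i / u q) 0
  refine ⟨vecMulVec x (Pi.single q 1), funext fun i => ?_⟩
  simp [agreementDefect, vecMulVec_mulVec, hu', x, hs.extend_apply, hu]

theorem agreementDefect_surjective_of_ne {m k ι : Type*} [Fintype k] [DecidableEq k]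
    {u u' : k → ZMod 2} (hu : u ≠ u') {s s' : ι → m} (hs : Injective s) (hs' : Injective s') :
    Surjective (agreementDefect u u' s s') := by
  obtain ⟨q, hq⟩ := Function.ne_iff.mp hu
  have hcoord : (u q ≠ 0 ∧ u' q = 0) ∨ (u' q ≠ 0 ∧ u q = 0) := by
    generalize u q = a, u' q = b at hq; revert a b; decide
  rcases hcoord with ⟨h, h'⟩ | ⟨h, h'⟩
  · exact agreementDefect_surjective s' h h' hs
  · rw [← neg_neg (agreementDefect u u' s s'), ← agreementDefect_swap, LinearMap.coe_neg]
    exact neg_surjective.comp (agreementDefect_surjective s h h' hs')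

/-- Claim 4.1 of Cheng–Guruswami–Haeupler–Li: for a uniformly random linear map
`G : F_2^k → F_2^m`, fixed distinct messages `u ≠ u'` and fixed increasing index
sequences `s, s'` of length `t`, the probability (over `G`) that
`(Gu)_{s_i} = (Gu')_{s'_i}` for all `i` is at most `2^{-t}`. -/
theorem prob_agree_on_index_seqs_le (m k t : ℕ) (u u' : Fin k → ZMod 2) (hu : u ≠ u')
    (s s' : Fin t → Fin m) (hs : StrictMono s) (hs' : StrictMono s') :
    (Nat.card {G : Matrix (Fin m) (Fin k) (ZMod 2) //
        ∀ i : Fin t, G.mulVec u (s i) = G.mulVec u' (s' i)} : ℝ) / 2 ^ (m * k) ≤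
      ((2 : ℝ))⁻¹ ^ t := by
  have hsurj := agreementDefect_surjective_of_ne hu hs.injective hs'.injective
  have hcard : (Nat.card {G : Matrix (Fin m) (Fin k) (ZMod 2) //
      ∀ i : Fin t, G.mulVec u (s i) = G.mulVec u' (s' i)} : ℝ) * 2 ^ t = 2 ^ (m * k) := by
    rw [Nat.card_congr (Equiv.subtypeEquivRight fun G => mem_ker_agreementDefect_iff.symm)]
    exact_mod_cast by simpa [Nat.card_eq_fintype_card, Matrix, ← pow_mul, mul_comm k] using
      LinearMap.card_ker_mul_card_of_surjective _ hsurj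
  rw [div_le_iff₀ (by positivity), ← hcard, inv_pow, mul_comm,
    mul_inv_cancel_right₀ (by positivity)]
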